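/- arXiv:1903.10983 — 2 statements merged into one kernel-verified Lean document; each statement's English description precedes it below -/
import Mathlib

section
/- There is a constant C > 0 such that the following holds. For every n ∈ ℕ and every D ∈ ℕ, every f ∈ [1/3, 1]^n with ‖f‖₁ ≤ n − D, and x¹, x² sampled independently from f, one has Pr[ |‖x¹‖₁ − ‖x²‖₁| ≥ (1/5)·√D ] ≥ C. -/
/-!
Write `Y = ‖x¹‖₁ - ‖x²‖₁ = ∑ᵢ (x¹ᵢ - x²ᵢ)`. The summands are independent, take values in
`{-1, 0, 1}`, have mean `0` and variance `sᵢ = 2 fᵢ (1 - fᵢ)`, so with `S = ∑ᵢ sᵢ` the binomial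
expansion of `Y²` and `Y⁴`, coordinate by coordinate, gives `𝔼 Y² = S` and `𝔼 Y⁴ ≤ 3 S² + S`.
Since `fᵢ ≥ 1/3` we have `sᵢ ≥ 2/3 (1 - fᵢ)`, hence `S ≥ 2D/3`. The Paley–Zygmund inequality for
`Y²` at level `t² = D/25 ≤ 3S/50` then yields `Pr[|Y| ≥ t] ≥ (47/50)² S² / (3 S² + S)`, which is
at least `1/10` once `D ≥ 1` (so `S ≥ 2/3`); for `D = 0` the event is certain.
-/

open Finset

noncomputable def sampleProb {n : ℕ} (f : Fin n → ℝ) (x : Fin n → Bool) : ℝ :=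
  ∏ i, if x i then f i else 1 - f i

noncomputable def prPair {n : ℕ} (f : Fin n → ℝ)
    (E : Set ((Fin n → Bool) × (Fin n → Bool))) : ℝ :=
  ∑ p : (Fin n → Bool) × (Fin n → Bool),
    Set.indicator E (fun p => sampleProb f p.1 * sampleProb f p.2) p

def numOnes {n : ℕ} (x : Fin n → Bool) : ℕ :=
  (Finset.univ.filter (fun i => x i = true)).card

section PiExpect

variable {α : Type*} [Fintype α]

noncomputable def piExpect {n : ℕ} (w : Fin n → α → ℝ) (g : (Fin n → α) → ℝ) : ℝ :=
  ∑ c, (∏ i, w i (c i)) * g c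

variable {n : ℕ}

theorem piExpect_sum {ι : Type*} (s : Finset ι) (w : Fin n → α → ℝ)
    (g : ι → (Fin n → α) → ℝ) :
    piExpect w (fun c => ∑ j ∈ s, g j c) = ∑ j ∈ s, piExpect w (g j) := by
  simp only [piExpect, Finset.mul_sum]
  exact Finset.sum_comm

theorem piExpect_const_mul (w : Fin n → α → ℝ) (r : ℝ) (g : (Fin n → α) → ℝ) :
    piExpect w (fun c => r * g c) = r * piExpect w g := by
  simp only [piExpect, Finset.mul_sum]
  exact Finset.sum_congr rfl fun c _ => by ring

theorem piExpect_succ (w : Fin (n + 1) → α → ℝ) (g : (Fin (n + 1) → α) → ℝ) :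
    piExpect w g =
      ∑ a, w 0 a * piExpect (fun i => w i.succ) (fun c => g (Fin.cons a c)) := by
  simp only [piExpect, Finset.mul_sum]
  rw [← (Fin.consEquiv fun _ => α).sum_comp, Fintype.sum_prod_type]
  refine Finset.sum_congr rfl fun a _ => Finset.sum_congr rfl fun c _ => ?_
  simp only [Fin.consEquiv, Equiv.coe_fn_mk, Fin.prod_univ_succ, Fin.cons_zero, Fin.cons_succ,
    mul_assoc]

theorem piExpect_const (w : Fin n → α → ℝ) (hw : ∀ i, ∑ a, w i a = 1) (r : ℝ) :
    piExpect w (fun _ => r) = r := by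
  induction n with
  | zero => simp [piExpect]
  | succ n ih =>
    simp only [piExpect_succ, ih _ fun i => hw i.succ, ← Finset.sum_mul, hw 0, one_mul]

theorem piExpect_sum_pow_succ (w : Fin (n + 1) → α → ℝ) (v : α → ℝ) (k : ℕ) :
    piExpect w (fun c => (∑ i, v (c i)) ^ k) =
      ∑ j ∈ Finset.range (k + 1), (∑ a, w 0 a * v a ^ j) * k.choose j *
        piExpect (fun i => w i.succ) (fun c => (∑ i, v (c i)) ^ (k - j)) := by
  simp only [piExpect_succ, Fin.sum_univ_succ, Fin.cons_zero, Fin.cons_succ, add_pow,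
    piExpect_sum]
  have hterm : ∀ a j, piExpect (fun i => w i.succ)
      (fun c => v a ^ j * (∑ i, v (c i)) ^ (k - j) * k.choose j) =
        v a ^ j * k.choose j *
          piExpect (fun i => w i.succ) (fun c => (∑ i, v (c i)) ^ (k - j)) := by
    intro a j
    rw [← piExpect_const_mul]
    exact congrArg _ (funext fun c => by ring)
  simp only [hterm, Finset.mul_sum, Finset.sum_mul]
  rw [Finset.sum_comm]
  exact Finset.sum_congr rfl fun j _ => Finset.sum_congr rfl fun a _ => by ring

variable (v : α → ℝ)

theorem piExpect_sum_eq_zero (w : Fin n → α → ℝ) (hw : ∀ i, ∑ a, w i a = 1)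
    (hmean : ∀ i, ∑ a, w i a * v a = 0) : piExpect w (fun c => ∑ i, v (c i)) = 0 := by
  induction n with
  | zero => simp [piExpect]
  | succ n ih =>
    simpa [Finset.sum_range_succ, hw 0, hmean 0, ih _ (fun i => hw i.succ) fun i => hmean i.succ,
      piExpect_const _ fun i => hw i.succ] using piExpect_sum_pow_succ w v 1

theorem piExpect_sum_sq (w : Fin n → α → ℝ) (hw : ∀ i, ∑ a, w i a = 1)
    (hmean : ∀ i, ∑ a, w i a * v a = 0) :
    piExpect w (fun c => (∑ i, v (c i)) ^ 2) = ∑ i, ∑ a, w i a * v a ^ 2 := by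
  induction n with
  | zero => simp [piExpect]
  | succ n ih =>
    rw [piExpect_sum_pow_succ, Fin.sum_univ_succ]
    simp only [Finset.sum_range_succ, Finset.range_one, Finset.sum_singleton, pow_zero, pow_one,
      mul_one, one_mul, zero_mul, add_zero, tsub_zero, tsub_self, Nat.choose_zero_right,
      Nat.choose_succ_self_right, Nat.choose_self, Nat.cast_one, Nat.add_one_sub_one,
      hw 0, hmean 0, ih _ (fun i => hw i.succ) fun i => hmean i.succ,
      piExpect_const _ fun i => hw i.succ]
    ring

theorem piExpect_sum_pow_four_le (w : Fin n → α → ℝ) (hw : ∀ i, ∑ a, w i a = 1)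
    (hmean : ∀ i, ∑ a, w i a * v a = 0)
    (hfourth : ∀ i, ∑ a, w i a * v a ^ 4 ≤ ∑ a, w i a * v a ^ 2) :
    piExpect w (fun c => (∑ i, v (c i)) ^ 4) ≤
      3 * (∑ i, ∑ a, w i a * v a ^ 2) ^ 2 + ∑ i, ∑ a, w i a * v a ^ 2 := by
  induction n with
  | zero => simp [piExpect]
  | succ n ih =>
    have hw' : ∀ i : Fin n, ∑ a, w i.succ a = 1 := fun i => hw i.succ
    have hmean' : ∀ i : Fin n, ∑ a, w i.succ a * v a = 0 := fun i => hmean i.succ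
    rw [piExpect_sum_pow_succ, Fin.sum_univ_succ]
    simp only [Finset.sum_range_succ, Finset.range_one, Finset.sum_singleton, pow_zero, pow_one,
      mul_one, one_mul, zero_mul, mul_zero, add_zero, tsub_zero, tsub_self, Nat.reduceSub,
      Nat.choose_zero_right, Nat.choose_one_right, Nat.choose_succ_self_right, Nat.choose_self,
      Nat.cast_one, Nat.cast_ofNat, Nat.add_one_sub_one, hw 0, hmean 0, piExpect_const _ hw',
      piExpect_sum_eq_zero v _ hw' hmean', piExpect_sum_sq v _ hw' hmean']
    have hchoose : ((Nat.choose 4 2 : ℕ) : ℝ) = 6 := by norm_num [Nat.choose]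
    rw [hchoose]
    nlinarith [ih _ hw' hmean' fun i => hfourth i.succ, hfourth 0,
      sq_nonneg (∑ a, w 0 a * v a ^ 2)]

end PiExpect

theorem paley_zygmund_sum {Ω : Type*} [Fintype Ω] (μ : Ω → ℝ) (hμ : ∀ ω, 0 ≤ μ ω)
    (hμ1 : ∑ ω, μ ω = 1) (Z : Ω → ℝ) {t : ℝ} (ht : t ^ 2 ≤ ∑ ω, μ ω * Z ω ^ 2) :
    (∑ ω, μ ω * Z ω ^ 2 - t ^ 2) ^ 2 ≤
      (∑ ω, μ ω * Z ω ^ 4) * ∑ ω, {ω | t ≤ |Z ω|}.indicator μ ω := by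
  set A := {ω | t ≤ |Z ω|}
  have hsplit : ∑ ω, μ ω * Z ω ^ 2 ≤ t ^ 2 + ∑ ω, A.indicator (fun ω => μ ω * Z ω ^ 2) ω := by
    rw [← mul_one (t ^ 2), ← hμ1, Finset.mul_sum, ← Finset.sum_add_distrib]
    refine Finset.sum_le_sum fun ω _ => ?_
    by_cases hω : ω ∈ A
    · simp only [Set.indicator_of_mem hω]
      nlinarith [hμ ω, sq_nonneg t]
    · have hZt : Z ω ^ 2 ≤ t ^ 2 := by
        have : |Z ω| < t := not_le.mp hω
        nlinarith [abs_nonneg (Z ω), sq_abs (Z ω)]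
      simp only [Set.indicator_of_notMem hω, add_zero]
      nlinarith [hμ ω]
  have hcs : (∑ ω, A.indicator (fun ω => μ ω * Z ω ^ 2) ω) ^ 2 ≤
      (∑ ω, μ ω * Z ω ^ 4) * ∑ ω, A.indicator μ ω := by
    refine Finset.sum_sq_le_sum_mul_sum_of_sq_le_mul _ (fun ω _ => by have := hμ ω; positivity)
      (fun ω _ => Set.indicator_nonneg (fun ω _ => hμ ω) ω) fun ω _ => ?_
    by_cases hω : ω ∈ A
    · simp only [Set.indicator_of_mem hω]
      exact le_of_eq (by ring)
    · simp [Set.indicator_of_notMem hω]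
  exact (pow_le_pow_left₀ (by linarith) (by linarith) 2).trans hcs

noncomputable def pairWeight (p : ℝ) (c : Bool × Bool) : ℝ :=
  (if c.1 then p else 1 - p) * (if c.2 then p else 1 - p)

def pairDiff (c : Bool × Bool) : ℝ := (if c.1 then 1 else 0) - (if c.2 then 1 else 0)

theorem sum_pairWeight (p : ℝ) : ∑ c, pairWeight p c = 1 := by
  simp only [Fintype.sum_prod_type, Fintype.sum_bool, pairWeight, Bool.false_eq_true, ↓reduceIte]
  ring

theorem sum_pairWeight_mul_pairDiff (p : ℝ) : ∑ c, pairWeight p c * pairDiff c = 0 := by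
  simp only [Fintype.sum_prod_type, Fintype.sum_bool, pairWeight, pairDiff, Bool.false_eq_true, ↓reduceIte]
  ring

theorem sum_pairWeight_mul_pairDiff_sq (p : ℝ) :
    ∑ c, pairWeight p c * pairDiff c ^ 2 = 2 * p * (1 - p) := by
  simp only [Fintype.sum_prod_type, Fintype.sum_bool, pairWeight, pairDiff, Bool.false_eq_true, ↓reduceIte]
  ring

theorem pairDiff_pow_four (c : Bool × Bool) : pairDiff c ^ 4 = pairDiff c ^ 2 := by
  rcases c with ⟨_ | _, _ | _⟩ <;> norm_num [pairDiff]

theorem sum_sampleProb_mul_sampleProb_mul {n : ℕ} (f : Fin n → ℝ)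
    (g : (Fin n → Bool) × (Fin n → Bool) → ℝ) :
    ∑ x, sampleProb f x.1 * sampleProb f x.2 * g x =
      piExpect (fun i => pairWeight (f i)) (fun c => g (fun i => (c i).1, fun i => (c i).2)) := by
  rw [piExpect,
    ← (Equiv.arrowProdEquivProdArrow (Fin n) (fun _ => Bool) (fun _ => Bool)).sum_comp]
  refine Finset.sum_congr rfl fun c _ => ?_
  rw [sampleProb, sampleProb, ← Finset.prod_mul_distrib]
  rfl

theorem numOnes_sub_numOnes {n : ℕ} (x : (Fin n → Bool) × (Fin n → Bool)) :
    (numOnes x.1 : ℝ) - numOnes x.2 = ∑ i, pairDiff (x.1 i, x.2 i) := by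
  simp only [numOnes, Finset.natCast_card_filter, pairDiff, Finset.sum_sub_distrib]

section TwoSamples

variable {n : ℕ} (f : Fin n → ℝ)

theorem sampleProb_nonneg (hf : ∀ i, 0 ≤ f i ∧ f i ≤ 1) (x : Fin n → Bool) :
    0 ≤ sampleProb f x :=
  Finset.prod_nonneg fun i _ => by split <;> linarith [hf i]

theorem sum_sampleProb_mul_sampleProb :
    ∑ x : (Fin n → Bool) × (Fin n → Bool), sampleProb f x.1 * sampleProb f x.2 = 1 := by
  simpa [piExpect_const _ fun i => sum_pairWeight (f i)] using
    sum_sampleProb_mul_sampleProb_mul f fun _ => 1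

theorem sum_sampleProb_mul_sampleProb_mul_sq :
    ∑ x : (Fin n → Bool) × (Fin n → Bool),
        sampleProb f x.1 * sampleProb f x.2 * ((numOnes x.1 : ℝ) - numOnes x.2) ^ 2 =
      ∑ i, 2 * f i * (1 - f i) := by
  simp only [numOnes_sub_numOnes, sum_sampleProb_mul_sampleProb_mul,
    piExpect_sum_sq pairDiff _ (fun i => sum_pairWeight (f i))
      fun i => sum_pairWeight_mul_pairDiff (f i), sum_pairWeight_mul_pairDiff_sq]

theorem sum_sampleProb_mul_sampleProb_mul_pow_four_le :
    ∑ x : (Fin n → Bool) × (Fin n → Bool),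
        sampleProb f x.1 * sampleProb f x.2 * ((numOnes x.1 : ℝ) - numOnes x.2) ^ 4 ≤
      3 * (∑ i, 2 * f i * (1 - f i)) ^ 2 + ∑ i, 2 * f i * (1 - f i) := by
  simp only [numOnes_sub_numOnes, sum_sampleProb_mul_sampleProb_mul,
    ← sum_pairWeight_mul_pairDiff_sq]
  exact piExpect_sum_pow_four_le pairDiff _ (fun i => sum_pairWeight (f i))
    (fun i => sum_pairWeight_mul_pairDiff (f i)) fun i => by simp only [pairDiff_pow_four, le_rfl]

theorem two_div_three_mul_le_sum_two_mul_mul_one_sub {D : ℝ}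
    (hf : ∀ i, 1 / 3 ≤ f i ∧ f i ≤ 1) (hsum : ∑ i, f i ≤ n - D) :
    2 / 3 * D ≤ ∑ i, 2 * f i * (1 - f i) :=
  calc 2 / 3 * D ≤ ∑ i, 2 / 3 * (1 - f i) := by
        rw [← Finset.mul_sum, Finset.sum_sub_distrib]
        simp only [Finset.sum_const, Finset.card_univ, Fintype.card_fin, nsmul_eq_mul, mul_one]
        linarith
    _ ≤ ∑ i, 2 * f i * (1 - f i) := Finset.sum_le_sum fun i _ => by nlinarith [hf i]

end TwoSamples

/-- There is a constant `C > 0` such that for all `n, D ∈ ℕ`, every `f ∈ [1/3, 1]^n` with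
`‖f‖₁ ≤ n - D`, and two independent samples `x¹, x²` from `f`, the probability that
`|‖x¹‖₁ - ‖x²‖₁| ≥ (1/5)√D` is at least `C`. -/
theorem two_samples_differ : ∃ C : ℝ, 0 < C ∧
    ∀ (n D : ℕ) (f : Fin n → ℝ), (∀ i, 1 / 3 ≤ f i ∧ f i ≤ 1) →
      (∑ i, f i) ≤ (n : ℝ) - (D : ℝ) →
      C ≤ prPair f {p | (1 / 5) * Real.sqrt D ≤
            |(numOnes p.1 : ℝ) - (numOnes p.2 : ℝ)|} := by
  refine ⟨1 / 10, by norm_num, fun n D f hf hsum => ?_⟩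
  rcases Nat.eq_zero_or_pos D with rfl | hD
  · norm_num [prPair, sum_sampleProb_mul_sampleProb]
  have hD1 : (1 : ℝ) ≤ D := by exact_mod_cast hD
  set S := ∑ i, 2 * f i * (1 - f i)
  have hSD : 2 / 3 * (D : ℝ) ≤ S :=
    two_div_three_mul_le_sum_two_mul_mul_one_sub f hf hsum
  have hμ (x : (Fin n → Bool) × (Fin n → Bool)) : 0 ≤ sampleProb f x.1 * sampleProb f x.2 := by
    have hf01 (i : Fin n) : 0 ≤ f i ∧ f i ≤ 1 := ⟨by linarith [hf i], (hf i).2⟩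
    exact mul_nonneg (sampleProb_nonneg f hf01 x.1) (sampleProb_nonneg f hf01 x.2)
  have ht : (1 / 5 * Real.sqrt D) ^ 2 = D / 25 := by
    rw [mul_pow, Real.sq_sqrt (Nat.cast_nonneg _)]; ring
  have hPZ := paley_zygmund_sum (Ω := (Fin n → Bool) × (Fin n → Bool))
    (fun x => sampleProb f x.1 * sampleProb f x.2) hμ (sum_sampleProb_mul_sampleProb f)
    (fun x => (numOnes x.1 : ℝ) - numOnes x.2) (t := 1 / 5 * Real.sqrt D)
    (by rw [sum_sampleProb_mul_sampleProb_mul_sq, ht]; linarith)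
  rw [sum_sampleProb_mul_sampleProb_mul_sq, ht] at hPZ
  set P := prPair f {p | (1 / 5) * Real.sqrt D ≤ |(numOnes p.1 : ℝ) - (numOnes p.2 : ℝ)|}
  have hP0 : 0 ≤ P := Finset.sum_nonneg fun x _ => Set.indicator_nonneg (fun x _ => hμ x) x
  have hlower : (47 / 50 * S) ^ 2 ≤ (S - D / 25) ^ 2 :=
    pow_le_pow_left₀ (by linarith) (by linarith) 2
  have hupper : (S - D / 25) ^ 2 ≤ 9 / 2 * S ^ 2 * P :=
    hPZ.trans (mul_le_mul_of_nonneg_right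
      ((sum_sampleProb_mul_sampleProb_mul_pow_four_le f).trans (by nlinarith)) hP0)
  nlinarith
end

section
/- Let 0 < c < 1 and let f ∈ [c, 1]^n. Let x be sampled from f. Then Pr[x = (1, ..., 1)] ≥ c^{(n − ‖f‖₁)/(1−c)}; equivalently, ∏_{i=1}^{n} fᵢ ≥ c^{(n − Σ_{i=1}^{n} fᵢ)/(1−c)}. -/
open Finset

noncomputable def prSample {n : ℕ} (f : Fin n → ℝ) (E : Set (Fin n → Bool)) : ℝ :=
  ∑ x : Fin n → Bool, Set.indicator E (sampleProb f) x

lemma pointwise_aux {c t : ℝ} (hc0 : 0 < c) (hc1 : c < 1) (hct : c ≤ t) (ht1 : t ≤ 1) :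
    c ^ ((1 - t) / (1 - c)) ≤ t := by
  set θ : ℝ := (1 - t) / (1 - c) with hθ
  have h1c : 0 < 1 - c := by linarith
  have hθ0 : 0 ≤ θ := div_nonneg (by linarith) h1c.le
  have hθ1 : θ ≤ 1 := by rw [hθ, div_le_one h1c]; linarith
  have key := convexOn_exp.2 (Set.mem_univ (Real.log c)) (Set.mem_univ (0 : ℝ))
    hθ0 (by linarith : (0:ℝ) ≤ 1 - θ) (by ring)
  simp only [smul_eq_mul, mul_zero, add_zero, Real.exp_zero] at key
  have hpow : c ^ θ = Real.exp (θ * Real.log c) := by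
    rw [mul_comm, Real.exp_mul, Real.exp_log hc0]
  rw [hpow]
  have ht : θ * c + (1 - θ) * 1 = t := by
    rw [hθ]; field_simp; ring
  calc Real.exp (θ * Real.log c) ≤ θ * Real.exp (Real.log c) + (1 - θ) * 1 := key
    _ = θ * c + (1 - θ) * 1 := by rw [Real.exp_log hc0]
    _ = t := ht

/-- For `f ∈ [c, 1]^n` with `0 < c < 1` and `x ∼ Sample(f)`, the probability of
sampling the all-ones string is `∏ fᵢ ≥ c^((n - ‖f‖₁)/(1-c))`. -/
theorem sample_optimum_prob (n : ℕ) (c : ℝ) (hc0 : 0 < c) (hc1 : c < 1)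
    (f : Fin n → ℝ) (hf : ∀ i, c ≤ f i ∧ f i ≤ 1) :
    c ^ (((n : ℝ) - ∑ i, f i) / (1 - c)) ≤ prSample f {x | ∀ i, x i = true} ∧
    c ^ (((n : ℝ) - ∑ i, f i) / (1 - c)) ≤ ∏ i, f i := by
  have hprod : c ^ (((n : ℝ) - ∑ i, f i) / (1 - c)) ≤ ∏ i, f i := by
    have hsum : ((n : ℝ) - ∑ i, f i) / (1 - c) = ∑ i, (1 - f i) / (1 - c) := by
      rw [← Finset.sum_div, Finset.sum_sub_distrib]
      simp
    rw [hsum, Real.rpow_sum_of_pos hc0]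
    exact Finset.prod_le_prod (fun i _ => (Real.rpow_nonneg hc0.le _))
      (fun i _ => pointwise_aux hc0 hc1 (hf i).1 (hf i).2)
  have hpr : prSample f {x | ∀ i, x i = true} = ∏ i, f i := by
    unfold prSample
    rw [Finset.sum_eq_single (fun _ => true)]
    · simp [Set.indicator, Set.mem_setOf_eq, sampleProb]
    · intro x _ hx
      rw [Set.indicator_of_notMem]
      simp only [Set.mem_setOf_eq]
      intro h
      exact hx (funext h)
    · simp
  exact ⟨hpr ▸ hprod, hprod⟩
end
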